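/- arXiv:2506.10273 — 2 statements merged into one kernel-verified Lean document; each statement's English description precedes it below -/
import Mathlib

section
/- For every k ∈ ℕ₀ and r ∈ (0,1] one has |ψ_k^ℓ(r)| ≤ (2/(2ℓ+1))^k (r^{ℓ+1}/k!) (∫₀^r s|V(s)| ds)^k, and for every k ≥ 1 and r ∈ (0,1] one has |(ψ_k^ℓ)'(r)| ≤ (2/(2ℓ+1))^{k−1} (r^ℓ/k!) (∫₀^r s|V(s)| ds)^k. -/
open Real Set MeasureTheory Filter

/-- The kernel `L_ℓ(r,s) = (1/(2ℓ+1))(r^{ℓ+1}/s^ℓ − s^{ℓ+1}/r^ℓ)`. -/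
noncomputable def besselKer (ℓ r s : ℝ) : ℝ :=
  (1 / (2 * ℓ + 1)) * (r ^ (ℓ + 1) / s ^ ℓ - s ^ (ℓ + 1) / r ^ ℓ)

/-- The iterates `ψ₀^ℓ(r) = r^{ℓ+1}`,
`ψ_k^ℓ(r) = ∫₀^r L_ℓ(r,s) V(s) ψ_{k−1}^ℓ(s) ds`. -/
noncomputable def sppsPsi (ℓ : ℝ) (V : ℝ → ℂ) : ℕ → ℝ → ℂ
  | 0 => fun r => ((r ^ (ℓ + 1) : ℝ) : ℂ)
  | k + 1 => fun r => ∫ s in Set.Ioc (0 : ℝ) r,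
      ((besselKer ℓ r s : ℝ) : ℂ) * V s * sppsPsi ℓ V k s

/-- The regular solution `w_ℓ(r) = Σ_{k=0}^∞ ψ_k^ℓ(r)`. -/
noncomputable def sppsW (ℓ : ℝ) (V : ℝ → ℂ) (r : ℝ) : ℂ :=
  ∑' k : ℕ, sppsPsi ℓ V k r

/-!
For `0 < s ≤ r` one has `|L_ℓ(r,s)| ≤ r^{ℓ+1} s^{-ℓ} / (2ℓ+1)` and `|∂_r L_ℓ(r,s)| ≤ r^ℓ s^{-ℓ}`.
With `Q(r) = ∫₀^r s|V(s)| ds`, an induction on `k` then reduces both estimates to the identity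
`∫₀^r Q(s)^k Q'(s) ds = Q(r)^{k+1}/(k+1)`, valid because `Q` is absolutely continuous.

For the derivative, `L_ℓ(s,s) = 0` lets one write
`ψ_{k+1}(x) = ∫₀¹ L_ℓ(max(x,s),s) V(s) ψ_k(s) ds` for `x ∈ [0,1]`: an integral over a fixed
domain whose integrand is Lipschitz in `x`, with integrable constant `2^ℓ s^{-ℓ} |V(s) ψ_k(s)|`,
and differentiable at `x = r` for every `s ≠ r`.
-/

open scoped Topology

theorem AbsolutelyContinuousOnInterval.fun_pow {f : ℝ → ℝ} {a b : ℝ}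
    (hf : AbsolutelyContinuousOnInterval f a b) (n : ℕ) :
    AbsolutelyContinuousOnInterval (fun x => f x ^ n) a b := by
  induction n with
  | zero =>
    simpa using (LipschitzWith.const (1 : ℝ)).lipschitzOnWith.absolutelyContinuousOnInterval
  | succ n ih => simpa only [pow_succ] using ih.fun_mul hf

theorem intervalIntegral.integral_primitive_pow_mul {g : ℝ → ℝ} {a b : ℝ}
    (hg : IntervalIntegrable g volume a b) (k : ℕ) :
    ∫ x in a..b, (∫ t in a..x, g t) ^ k * g x = (∫ t in a..b, g t) ^ (k + 1) / (k + 1) := by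
  set G : ℝ → ℝ := fun x => ∫ t in a..x, g t
  have hG : AbsolutelyContinuousOnInterval G a b :=
    hg.absolutelyContinuousOnInterval_intervalIntegral left_mem_uIcc
  have hderiv : ∀ᵐ x, x ∈ uIoc a b →
      deriv (fun x => G x ^ (k + 1)) x = G x ^ k * g x * (k + 1) := by
    filter_upwards [hg.ae_hasDerivAt_integral] with x hx hxab
    rw [((hx (uIoc_subset_uIcc hxab) a left_mem_uIcc).fun_pow (k + 1)).deriv]
    push_cast
    ring
  rw [eq_div_iff (by positivity), ← intervalIntegral.integral_mul_const,
    ← intervalIntegral.integral_congr_ae hderiv, (hG.fun_pow (k + 1)).integral_deriv_eq_sub]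
  simp [G]

noncomputable def besselKerDeriv (ℓ r s : ℝ) : ℝ :=
  (1 / (2 * ℓ + 1)) * ((ℓ + 1) * r ^ ℓ / s ^ ℓ + ℓ * s ^ (ℓ + 1) / r ^ (ℓ + 1))

section Kernel

variable {ℓ r s : ℝ}

theorem besselKer_self (ℓ s : ℝ) : besselKer ℓ s s = 0 := by
  simp [besselKer]

theorem hasDerivAt_besselKer (ℓ s : ℝ) (hr : 0 < r) :
    HasDerivAt (fun x => besselKer ℓ x s) (besselKerDeriv ℓ r s) r := by
  have h₁ := (hasDerivAt_rpow_const (p := ℓ + 1) (Or.inl hr.ne')).div_const (s ^ ℓ)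
  have h₂ := (hasDerivAt_const r (s ^ (ℓ + 1))).div
    (hasDerivAt_rpow_const (p := ℓ) (Or.inl hr.ne')) (rpow_pos_of_pos hr ℓ).ne'
  refine ((h₁.sub h₂).const_mul (1 / (2 * ℓ + 1))).congr_deriv ?_
  have h₃ : r ^ ℓ = r ^ (ℓ - 1) * r := by rw [← rpow_add_one hr.ne', sub_add_cancel]
  have h₄ : r ^ (ℓ + 1) = r ^ (ℓ - 1) * r * r := by rw [← h₃, rpow_add_one hr.ne']
  have := rpow_pos_of_pos hr (ℓ - 1)
  simp only [besselKerDeriv, add_sub_cancel_right]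
  rw [h₄, h₃]
  field_simp
  ring

theorem abs_besselKer_le (hℓ : 0 ≤ ℓ) (hs : 0 < s) (hsr : s ≤ r) :
    |besselKer ℓ r s| ≤ 1 / (2 * ℓ + 1) * (r ^ (ℓ + 1) / s ^ ℓ) := by
  have hr : 0 < r := hs.trans_le hsr
  have hle : s ^ (ℓ + 1) / r ^ ℓ ≤ r ^ (ℓ + 1) / s ^ ℓ := by
    rw [div_le_div_iff₀ (by positivity) (by positivity), ← rpow_add hs, ← rpow_add hr]
    exact rpow_le_rpow hs.le hsr (by linarith)
  have h₀ : 0 ≤ s ^ (ℓ + 1) / r ^ ℓ := by positivity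
  rw [besselKer, abs_mul, abs_of_pos (one_div_pos.2 (by linarith)), abs_of_nonneg (by linarith)]
  gcongr
  linarith

theorem abs_besselKerDeriv_le (hℓ : 0 ≤ ℓ) (hs : 0 < s) (hsr : s ≤ r) :
    |besselKerDeriv ℓ r s| ≤ r ^ ℓ / s ^ ℓ := by
  have hr : 0 < r := hs.trans_le hsr
  have h₁ : 1 ≤ r ^ ℓ / s ^ ℓ := (one_le_div (by positivity)).2 (rpow_le_rpow hs.le hsr hℓ)
  have h₂ : s ^ (ℓ + 1) / r ^ (ℓ + 1) ≤ 1 :=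
    (div_le_one (by positivity)).2 (rpow_le_rpow hs.le hsr (by linarith))
  have h₃ : 0 ≤ s ^ (ℓ + 1) / r ^ (ℓ + 1) := by positivity
  rw [abs_of_nonneg (by unfold besselKerDeriv; positivity), besselKerDeriv, mul_div_assoc,
    mul_div_assoc, div_mul_eq_mul_div, one_mul, div_le_iff₀ (by linarith)]
  nlinarith

theorem abs_besselKer_max_sub_le (hℓ : 0 ≤ ℓ) (hs : 0 < s) {b x y : ℝ} (hsb : s ≤ b)
    (hx : x ≤ b) (hy : y ≤ b) :
    |besselKer ℓ (max x s) s - besselKer ℓ (max y s) s| ≤ b ^ ℓ / s ^ ℓ * |x - y| := by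
  have hderiv : ∀ u ∈ Icc s b, HasDerivWithinAt (fun u => besselKer ℓ u s)
      (besselKerDeriv ℓ u s) (Icc s b) u :=
    fun u hu => (hasDerivAt_besselKer ℓ s (hs.trans_le hu.1)).hasDerivWithinAt
  have hbound : ∀ u ∈ Icc s b, ‖besselKerDeriv ℓ u s‖ ≤ b ^ ℓ / s ^ ℓ := fun u hu =>
    (abs_besselKerDeriv_le hℓ hs hu.1).trans <| by
      gcongr; exacts [(hs.trans_le hu.1).le, hu.2]
  have h := (convex_Icc s b).norm_image_sub_le_of_norm_hasDerivWithin_le hderiv hbound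
    ⟨le_max_right y s, max_le hy hsb⟩ ⟨le_max_right x s, max_le hx hsb⟩
  rw [Real.norm_eq_abs, Real.norm_eq_abs] at h
  have hb : 0 < b := hs.trans_le hsb
  exact h.trans (mul_le_mul_of_nonneg_left (abs_max_sub_max_le_abs x y s) (by positivity))

theorem lipschitzOnWith_besselKer_max_mul (hℓ : 0 ≤ ℓ) (hs : s ∈ Ioc 0 1) (c : ℂ) :
    LipschitzOnWith (nnabs (2 ^ ℓ * (‖c‖ / s ^ ℓ)))
      (fun x => (besselKer ℓ (max x s) s : ℂ) * c) (Iio 2) := by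
  refine LipschitzOnWith.of_dist_le_mul fun x hx y hy => ?_
  have h := abs_besselKer_max_sub_le hℓ hs.1 (hs.2.trans one_le_two) (mem_Iio.1 hx).le
    (mem_Iio.1 hy).le
  have := hs.1
  rw [coe_nnabs, abs_of_nonneg (by positivity), dist_eq_norm, ← sub_mul, ← Complex.ofReal_sub,
    norm_mul, Complex.norm_real, Real.norm_eq_abs, Real.dist_eq]
  calc _ ≤ 2 ^ ℓ / s ^ ℓ * |x - y| * ‖c‖ := by gcongr
    _ = _ := by ring

theorem hasDerivAt_besselKer_max_mul (ℓ : ℝ) (hs : 0 < s) (hsr : s ≠ r) (c : ℂ) :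
    HasDerivAt (fun x => (besselKer ℓ (max x s) s : ℂ) * c)
      (if s ≤ r then (besselKerDeriv ℓ r s : ℂ) * c else 0) r := by
  rcases hsr.lt_or_gt with hsr | hsr
  · have hF : (fun x => (besselKer ℓ (max x s) s : ℂ) * c)
        =ᶠ[𝓝 r] fun x => (besselKer ℓ x s : ℂ) * c := by
      filter_upwards [Ioi_mem_nhds hsr] with x hx
      rw [max_eq_left (mem_Ioi.1 hx).le]
    rw [if_pos hsr.le]
    exact ((hasDerivAt_besselKer ℓ s (hs.trans hsr)).ofReal_comp.mul_const c
      ).congr_of_eventuallyEq hF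
  · have hF : (fun x => (besselKer ℓ (max x s) s : ℂ) * c) =ᶠ[𝓝 r] fun _ => 0 := by
      filter_upwards [Iio_mem_nhds hsr] with x hx
      simp [max_eq_right (mem_Iio.1 hx).le, besselKer_self]
    rw [if_neg (not_le.2 hsr)]
    exact (hasDerivAt_const r 0).congr_of_eventuallyEq hF

end Kernel

noncomputable def potentialMoment (V : ℝ → ℂ) (r : ℝ) : ℝ := ∫ s in Ioc 0 r, s * ‖V s‖

section Moment

variable {V : ℝ → ℂ}

theorem potentialMoment_nonneg (V : ℝ → ℂ) (r : ℝ) : 0 ≤ potentialMoment V r :=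
  setIntegral_nonneg measurableSet_Ioc fun s hs => by have := hs.1; positivity

theorem continuousOn_potentialMoment (hV : IntegrableOn (fun s : ℝ => s * ‖V s‖) (Ioc 0 1)) :
    ContinuousOn (potentialMoment V) (Icc 0 1) :=
  intervalIntegral.continuousOn_primitive ((integrableOn_Icc_iff_integrableOn_Ioc).2 hV)

theorem integrableOn_potentialMoment_pow_mul
    (hV : IntegrableOn (fun s : ℝ => s * ‖V s‖) (Ioc 0 1)) (k : ℕ) :
    IntegrableOn (fun s => potentialMoment V s ^ k * (s * ‖V s‖)) (Ioc 0 1) :=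
  ((integrableOn_Icc_iff_integrableOn_Ioc).2 hV |>.continuousOn_mul
    ((continuousOn_potentialMoment hV).pow k) isCompact_Icc).mono_set Ioc_subset_Icc_self

theorem setIntegral_potentialMoment_pow_mul
    (hV : IntegrableOn (fun s : ℝ => s * ‖V s‖) (Ioc 0 1)) (k : ℕ) {r : ℝ} (hr : r ∈ Icc 0 1) :
    ∫ s in Ioc 0 r, potentialMoment V s ^ k * (s * ‖V s‖)
      = potentialMoment V r ^ (k + 1) / (k + 1) := by
  have hint : IntervalIntegrable (fun s : ℝ => s * ‖V s‖) volume 0 r :=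
    (intervalIntegrable_iff_integrableOn_Ioc_of_le hr.1).2
      (hV.mono_set (Ioc_subset_Ioc_right hr.2))
  have hmoment : ∀ s ∈ Ioc 0 r, potentialMoment V s = ∫ t in (0)..s, t * ‖V t‖ :=
    fun s hs => (intervalIntegral.integral_of_le hs.1.le).symm
  rw [setIntegral_congr_fun measurableSet_Ioc fun s hs => by rw [hmoment s hs],
    ← intervalIntegral.integral_of_le hr.1, intervalIntegral.integral_primitive_pow_mul hint,
    potentialMoment, intervalIntegral.integral_of_le hr.1]

theorem norm_setIntegral_mul_le_potentialMoment
    (hV : IntegrableOn (fun s : ℝ => s * ‖V s‖) (Ioc 0 1)) {ℓ : ℝ} {K : ℝ → ℝ} {f : ℝ → ℂ}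
    {A D : ℝ} {k : ℕ} {r : ℝ} (hr : r ∈ Icc 0 1) (hA : 0 ≤ A)
    (hK : ∀ s ∈ Ioc 0 r, |K s| ≤ A / s ^ ℓ)
    (hf : ∀ s ∈ Ioc 0 r, ‖f s‖ / s ^ ℓ ≤ D * (potentialMoment V s ^ k * (s * ‖V s‖))) :
    ‖∫ s in Ioc 0 r, (K s : ℂ) * f s‖ ≤ A * D * (potentialMoment V r ^ (k + 1) / (k + 1)) := by
  have hbound : ∀ s ∈ Ioc 0 r,
      ‖(K s : ℂ) * f s‖ ≤ A * D * (potentialMoment V s ^ k * (s * ‖V s‖)) := fun s hs => by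
    calc ‖(K s : ℂ) * f s‖ = |K s| * ‖f s‖ := by
          rw [norm_mul, Complex.norm_real, Real.norm_eq_abs]
      _ ≤ A / s ^ ℓ * ‖f s‖ := by gcongr; exact hK s hs
      _ = A * (‖f s‖ / s ^ ℓ) := by ring
      _ ≤ A * D * (potentialMoment V s ^ k * (s * ‖V s‖)) := by
        rw [mul_assoc]; exact mul_le_mul_of_nonneg_left (hf s hs) hA
  calc ‖∫ s in Ioc 0 r, (K s : ℂ) * f s‖
      ≤ ∫ s in Ioc 0 r, A * D * (potentialMoment V s ^ k * (s * ‖V s‖)) :=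
        norm_integral_le_of_norm_le (((integrableOn_potentialMoment_pow_mul hV k).mono_set
          (Ioc_subset_Ioc_right hr.2)).const_mul _) ((ae_restrict_iff' measurableSet_Ioc).2
            (Eventually.of_forall hbound))
    _ = A * D * (potentialMoment V r ^ (k + 1) / (k + 1)) := by
        rw [integral_const_mul, setIntegral_potentialMoment_pow_mul hV k hr]

end Moment

section Integral

variable {ℓ : ℝ}

theorem setIntegral_besselKer_max (ℓ : ℝ) (f : ℝ → ℂ) {x : ℝ} (hx : x ≤ 1) :
    ∫ s in Ioc 0 x, (besselKer ℓ x s : ℂ) * f s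
      = ∫ s in Ioc 0 1, (besselKer ℓ (max x s) s : ℂ) * f s := by
  rw [setIntegral_eq_of_subset_of_forall_sdiff_eq_zero measurableSet_Ioc
    (Ioc_subset_Ioc_right hx) fun s hs => ?_]
  · exact setIntegral_congr_fun measurableSet_Ioc fun s hs => by rw [max_eq_left hs.2]
  · rw [max_eq_right (not_le.1 fun h => hs.2 ⟨hs.1.1, h⟩).le, besselKer_self]
    simp

theorem hasDerivWithinAt_setIntegral_besselKer (hℓ : 0 ≤ ℓ) {f : ℝ → ℂ}
    (hf : AEStronglyMeasurable f (volume.restrict (Ioc 0 1)))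
    (hfi : IntegrableOn (fun s => ‖f s‖ / s ^ ℓ) (Ioc 0 1)) {r : ℝ} (hr : r ∈ Icc 0 1) :
    HasDerivWithinAt (fun x => ∫ s in Ioc 0 x, (besselKer ℓ x s : ℂ) * f s)
      (∫ s in Ioc 0 r, (besselKerDeriv ℓ r s : ℂ) * f s) (Icc 0 1) r := by
  set μ := volume.restrict (Ioc (0 : ℝ) 1)
  set F : ℝ → ℝ → ℂ := fun x s => (besselKer ℓ (max x s) s : ℂ) * f s
  set F' : ℝ → ℂ := (Iic r).indicator fun s => (besselKerDeriv ℓ r s : ℂ) * f s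
  have hmeas (x : ℝ) : AEStronglyMeasurable (F x) μ :=
    (Complex.measurable_ofReal.comp (by unfold besselKer; fun_prop)).aestronglyMeasurable.mul hf
  have hF'meas : AEStronglyMeasurable F' μ :=
    ((Complex.measurable_ofReal.comp (by unfold besselKerDeriv; fun_prop)
      ).aestronglyMeasurable.mul hf).indicator measurableSet_Iic
  have hlip : ∀ᵐ s ∂μ, LipschitzOnWith (nnabs (2 ^ ℓ * (‖f s‖ / s ^ ℓ))) (F · s) (Iio 2) := by
    filter_upwards [ae_restrict_mem measurableSet_Ioc] with s hs
    exact lipschitzOnWith_besselKer_max_mul hℓ hs (f s)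
  -- `F 0 = 0` on `(0,1]`, so the Lipschitz bound between `0` and `r` dominates `F r`.
  have hint : Integrable (F r) μ := by
    refine (hfi.const_mul (2 ^ ℓ)).mono' (hmeas r) ?_
    filter_upwards [hlip, ae_restrict_mem measurableSet_Ioc] with s hs hs'
    have h := hs.dist_le_mul r (by simp; linarith [hr.2]) 0 (by simp)
    have := hs'.1
    rw [show F 0 s = 0 by simp [F, max_eq_right hs'.1.le, besselKer_self], dist_zero_right,
      coe_nnabs, abs_of_nonneg (by positivity), dist_zero_right, Real.norm_eq_abs,
      abs_of_nonneg hr.1] at h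
    exact h.trans (mul_le_of_le_one_right (by positivity) hr.2)
  have hderiv : ∀ᵐ s ∂μ, HasDerivAt (F · s) (F' s) r := by
    filter_upwards [ae_restrict_of_ae (Measure.ae_ne volume r),
      ae_restrict_mem measurableSet_Ioc] with s hsr hs
    simpa only [F', indicator_apply, mem_Iic] using
      hasDerivAt_besselKer_max_mul ℓ hs.1 hsr (f s)
  obtain ⟨-, h⟩ := hasDerivAt_integral_of_dominated_loc_of_lip
    (Iio_mem_nhds (by linarith [hr.2] : r < 2)) (Eventually.of_forall hmeas) hint hF'meas hlip
    (hfi.const_mul _) hderiv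
  have hF' : ∫ s, F' s ∂μ = ∫ s in Ioc 0 r, (besselKerDeriv ℓ r s : ℂ) * f s := by
    rw [integral_indicator measurableSet_Iic, Measure.restrict_restrict measurableSet_Iic,
      inter_comm, Ioc_inter_Iic, min_eq_right hr.2]
  rw [← hF']
  exact h.hasDerivWithinAt.congr (fun x hx => setIntegral_besselKer_max ℓ f hx.2)
    (setIntegral_besselKer_max ℓ f hr.2)

end Integral

section Iterate

variable {ℓ : ℝ} {V : ℝ → ℂ} {ψ : ℝ → ℂ} {C : ℝ} {k : ℕ}

theorem norm_mul_div_rpow_le {s : ℝ} (hs : 0 < s)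
    (hψ : ‖ψ s‖ ≤ C * s ^ (ℓ + 1) * potentialMoment V s ^ k) :
    ‖V s * ψ s‖ / s ^ ℓ ≤ C * (potentialMoment V s ^ k * (s * ‖V s‖)) := by
  rw [norm_mul, div_le_iff₀ (by positivity)]
  calc ‖V s‖ * ‖ψ s‖ ≤ ‖V s‖ * (C * s ^ (ℓ + 1) * potentialMoment V s ^ k) := by gcongr
    _ = _ := by rw [Real.rpow_add_one hs.ne']; ring

theorem integrableOn_norm_mul_div_rpow (hVmeas : Measurable V)
    (hV : IntegrableOn (fun s : ℝ => s * ‖V s‖) (Ioc 0 1))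
    (hψm : AEStronglyMeasurable ψ (volume.restrict (Ioc 0 1)))
    (hψ : ∀ s ∈ Ioc 0 1, ‖ψ s‖ ≤ C * s ^ (ℓ + 1) * potentialMoment V s ^ k) :
    IntegrableOn (fun s => ‖V s * ψ s‖ / s ^ ℓ) (Ioc 0 1) := by
  refine ((integrableOn_potentialMoment_pow_mul hV k).const_mul C).mono'
    ((hVmeas.aestronglyMeasurable.mul hψm).norm.aemeasurable.div
      (by fun_prop : Measurable fun s : ℝ => s ^ ℓ).aemeasurable).aestronglyMeasurable ?_
  filter_upwards [ae_restrict_mem measurableSet_Ioc] with s hs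
  rw [Real.norm_of_nonneg (by have := hs.1; positivity)]
  exact norm_mul_div_rpow_le hs.1 (hψ s hs)

theorem hasDerivWithinAt_setIntegral_besselKer_mul (hℓ : 0 ≤ ℓ) (hVmeas : Measurable V)
    (hV : IntegrableOn (fun s : ℝ => s * ‖V s‖) (Ioc 0 1))
    (hψm : AEStronglyMeasurable ψ (volume.restrict (Ioc 0 1)))
    (hψ : ∀ s ∈ Ioc 0 1, ‖ψ s‖ ≤ C * s ^ (ℓ + 1) * potentialMoment V s ^ k)
    {r : ℝ} (hr : r ∈ Icc 0 1) :
    HasDerivWithinAt (fun x => ∫ s in Ioc 0 x, (besselKer ℓ x s : ℂ) * (V s * ψ s))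
      (∫ s in Ioc 0 r, (besselKerDeriv ℓ r s : ℂ) * (V s * ψ s)) (Icc 0 1) r :=
  hasDerivWithinAt_setIntegral_besselKer hℓ (hVmeas.aestronglyMeasurable.mul hψm)
    (integrableOn_norm_mul_div_rpow hVmeas hV hψm hψ) hr

theorem norm_setIntegral_besselKer_mul_le (hℓ : 0 ≤ ℓ)
    (hV : IntegrableOn (fun s : ℝ => s * ‖V s‖) (Ioc 0 1))
    (hψ : ∀ s ∈ Ioc 0 1, ‖ψ s‖ ≤ C * s ^ (ℓ + 1) * potentialMoment V s ^ k)
    {r : ℝ} (hr : r ∈ Icc 0 1) :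
    ‖∫ s in Ioc 0 r, (besselKer ℓ r s : ℂ) * (V s * ψ s)‖
      ≤ 1 / (2 * ℓ + 1) * r ^ (ℓ + 1) * C * (potentialMoment V r ^ (k + 1) / (k + 1)) :=
  norm_setIntegral_mul_le_potentialMoment hV hr
    (mul_nonneg (one_div_nonneg.2 (by linarith)) (rpow_nonneg hr.1 _))
    (fun s hs => mul_div_assoc (1 / (2 * ℓ + 1)) (r ^ (ℓ + 1)) (s ^ ℓ) ▸
      abs_besselKer_le hℓ hs.1 hs.2)
    fun s hs => norm_mul_div_rpow_le hs.1 (hψ s ⟨hs.1, hs.2.trans hr.2⟩)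

theorem norm_setIntegral_besselKerDeriv_mul_le (hℓ : 0 ≤ ℓ)
    (hV : IntegrableOn (fun s : ℝ => s * ‖V s‖) (Ioc 0 1))
    (hψ : ∀ s ∈ Ioc 0 1, ‖ψ s‖ ≤ C * s ^ (ℓ + 1) * potentialMoment V s ^ k)
    {r : ℝ} (hr : r ∈ Icc 0 1) :
    ‖∫ s in Ioc 0 r, (besselKerDeriv ℓ r s : ℂ) * (V s * ψ s)‖
      ≤ r ^ ℓ * C * (potentialMoment V r ^ (k + 1) / (k + 1)) :=
  norm_setIntegral_mul_le_potentialMoment hV hr (by have := hr.1; positivity)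
    (fun s hs => abs_besselKerDeriv_le hℓ hs.1 hs.2)
    fun s hs => norm_mul_div_rpow_le hs.1 (hψ s ⟨hs.1, hs.2.trans hr.2⟩)

end Iterate

theorem sppsPsi_succ (ℓ : ℝ) (V : ℝ → ℂ) (k : ℕ) :
    sppsPsi ℓ V (k + 1)
      = fun r => ∫ s in Ioc 0 r, (besselKer ℓ r s : ℂ) * (V s * sppsPsi ℓ V k s) := by
  simp only [sppsPsi, mul_assoc]

theorem continuousOn_sppsPsi_and_norm_le {ℓ : ℝ} (hℓ : 0 ≤ ℓ) {V : ℝ → ℂ}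
    (hVmeas : Measurable V) (hV : IntegrableOn (fun s : ℝ => s * ‖V s‖) (Ioc 0 1)) (k : ℕ) :
    ContinuousOn (sppsPsi ℓ V k) (Ioc 0 1) ∧ ∀ r ∈ Ioc 0 1,
      ‖sppsPsi ℓ V k r‖
        ≤ (2 * ℓ + 1)⁻¹ ^ k / k.factorial * r ^ (ℓ + 1) * potentialMoment V r ^ k := by
  induction k with
  | zero =>
    refine ⟨(Complex.continuous_ofReal.comp (continuous_rpow_const (by linarith))).continuousOn,
      fun r hr => ?_⟩
    simp [sppsPsi, Complex.norm_real, abs_of_nonneg (Real.rpow_nonneg hr.1.le _)]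
  | succ k ih =>
    obtain ⟨hcont, hbound⟩ := ih
    rw [sppsPsi_succ]
    refine ⟨fun r hr => (hasDerivWithinAt_setIntegral_besselKer_mul hℓ hVmeas hV
      (hcont.aestronglyMeasurable measurableSet_Ioc) hbound ⟨hr.1.le, hr.2⟩
      ).continuousWithinAt.mono Ioc_subset_Icc_self, fun r hr => ?_⟩
    refine (norm_setIntegral_besselKer_mul_le hℓ hV hbound ⟨hr.1.le, hr.2⟩).trans_eq ?_
    simp only [pow_succ, Nat.factorial_succ, inv_pow]
    push_cast
    field_simp

/-- The bounds `|ψ_k^ℓ(r)| ≤ (2/(2ℓ+1))^k (r^{ℓ+1}/k!) (∫₀^r s|V(s)| ds)^k` for `k ∈ ℕ₀`,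
and `|(ψ_k^ℓ)'(r)| ≤ (2/(2ℓ+1))^{k−1} (r^ℓ/k!) (∫₀^r s|V(s)| ds)^k` for `k ≥ 1`,
on `(0,1]`. -/
theorem sppsPsi_bounds (ℓ : ℝ) (hℓ : 0 < ℓ) (V : ℝ → ℂ) (hVmeas : Measurable V)
    (hV : IntegrableOn (fun s : ℝ => s * ‖V s‖) (Set.Ioc 0 1)) :
    (∀ k : ℕ, ∀ r ∈ Set.Ioc (0 : ℝ) 1,
      ‖sppsPsi ℓ V k r‖ ≤ (2 / (2 * ℓ + 1)) ^ k * (r ^ (ℓ + 1) / (k.factorial : ℝ))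
        * (∫ s in Set.Ioc (0 : ℝ) r, s * ‖V s‖) ^ k) ∧
    (∀ k : ℕ, 1 ≤ k → ∀ r ∈ Set.Ioc (0 : ℝ) 1,
      DifferentiableWithinAt ℝ (sppsPsi ℓ V k) (Set.Icc 0 1) r ∧
      ‖derivWithin (sppsPsi ℓ V k) (Set.Icc 0 1) r‖
        ≤ (2 / (2 * ℓ + 1)) ^ (k - 1) * (r ^ ℓ / (k.factorial : ℝ))
          * (∫ s in Set.Ioc (0 : ℝ) r, s * ‖V s‖) ^ k) := by
  have hψ := continuousOn_sppsPsi_and_norm_le hℓ.le hVmeas hV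
  have hc : (2 * ℓ + 1)⁻¹ ≤ 2 / (2 * ℓ + 1) := by
    rw [inv_eq_one_div]; gcongr; norm_num
  refine ⟨fun k r hr => ?_, fun k hk r hr => ?_⟩
  · have hM := potentialMoment_nonneg V r
    calc ‖sppsPsi ℓ V k r‖
        ≤ (2 * ℓ + 1)⁻¹ ^ k / k.factorial * r ^ (ℓ + 1) * potentialMoment V r ^ k :=
          (hψ k).2 r hr
      _ = (2 * ℓ + 1)⁻¹ ^ k * (r ^ (ℓ + 1) / k.factorial) * potentialMoment V r ^ k := by ring
      _ ≤ (2 / (2 * ℓ + 1)) ^ k * (r ^ (ℓ + 1) / k.factorial) * potentialMoment V r ^ k := by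
        have := rpow_nonneg hr.1.le (ℓ + 1)
        gcongr
  · obtain ⟨m, rfl⟩ := Nat.exists_eq_add_of_le' hk
    have hD := hasDerivWithinAt_setIntegral_besselKer_mul hℓ.le hVmeas hV
      ((hψ m).1.aestronglyMeasurable measurableSet_Ioc) (hψ m).2 ⟨hr.1.le, hr.2⟩
    rw [← sppsPsi_succ] at hD
    refine ⟨hD.differentiableWithinAt, ?_⟩
    rw [hD.derivWithin (uniqueDiffOn_Icc zero_lt_one r ⟨hr.1.le, hr.2⟩), Nat.add_sub_cancel]
    have hM := potentialMoment_nonneg V r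
    set M := potentialMoment V r
    calc _ ≤ r ^ ℓ * ((2 * ℓ + 1)⁻¹ ^ m / m.factorial) * (M ^ (m + 1) / (m + 1)) :=
          norm_setIntegral_besselKerDeriv_mul_le hℓ.le hV (hψ m).2 ⟨hr.1.le, hr.2⟩
      _ = (2 * ℓ + 1)⁻¹ ^ m * (r ^ ℓ / (m + 1).factorial) * M ^ (m + 1) := by
          rw [Nat.factorial_succ]; push_cast; field_simp
      _ ≤ (2 / (2 * ℓ + 1)) ^ m * (r ^ ℓ / (m + 1).factorial) * M ^ (m + 1) := by
          have := rpow_nonneg hr.1.le ℓ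
          gcongr
end

section
/- There exist constants C₁ > 0 and C₂ > 0, depending only on d and ∫₀¹ s|V(s)| ds, such that |α_m'(r)| ≤ m C₁ / r for all r ∈ (0,1] and all integers m ≥ 1, and |α₀'(r)| ≤ C₂ / r for all r ∈ (0,1]. -/
/-!
Write `Q(r) = ∫₀^r s |V(s)| ds` (`radialMass V r`). Since `|L_ℓ(r,s)| ≤ r^{ℓ+1} s^{-ℓ}` for
`s ≤ r` and `∫₀^r s |V(s)| Q(s)^k ds = Q(r)^{k+1}/(k+1)` (the fundamental theorem of calculus
for the absolutely continuous function `Q^{k+1}`), induction gives `|ψ_k(r)| ≤ r^{ℓ+1} Q(r)^k / k!`.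
Hence the series converges, `|w_ℓ(r)| ≤ e^{Q(1)} r^{ℓ+1}`, and `w_ℓ` solves the Volterra equation
`w_ℓ(r) = r^{ℓ+1} + ∫₀^r L_ℓ(r,s) V(s) w_ℓ(s) ds`. Factoring
`L_ℓ(r,s) = r^{ℓ+1} (s^{-2ℓ-1} - r^{-2ℓ-1}) s^{ℓ+1} / (2ℓ+1)` turns it into
`w_ℓ(r)/r^{ℓ+1} = 1 + (2ℓ+1)⁻¹ ∫₀^r (s^{-2ℓ-1} - r^{-2ℓ-1}) s^{ℓ+1} V(s) w_ℓ(s) ds`.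
Because this kernel vanishes on the diagonal, the right side is differentiable at every `r`,
although `V` is merely integrable, with derivative `r^{-2ℓ-2} ∫₀^r s^{ℓ+1} V(s) w_ℓ(s) ds`.
The integral is at most `e^{Q(1)} Q(1) r^{2ℓ+1}`, so `|α'(r)| ≤ Q(1) e^{Q(1)} / r` for every
`ℓ ≥ 0`, uniformly in `m`.
-/

open Real Set MeasureTheory Filter

/-- `ℓ_m = m + (d−3)/2`. -/
noncomputable def ellm (d m : ℕ) : ℝ := (m : ℝ) + ((d : ℝ) - 3) / 2

/-- `α_m(r) = y_m(r)/r^{ℓ_m+1}` where `y_m = w_{ℓ_m}`. -/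
noncomputable def alphaFun (d : ℕ) (V : ℝ → ℂ) (m : ℕ) (r : ℝ) : ℂ :=
  sppsW (ellm d m) V r / ((r ^ (ellm d m + 1) : ℝ) : ℂ)

open scoped Interval Topology Nat

theorem integral_mul_primitive_pow {f : ℝ → ℝ} {a b : ℝ} (hf : IntervalIntegrable f volume a b)
    (k : ℕ) :
    ∫ x in a..b, f x * (∫ t in a..x, f t) ^ k = (∫ t in a..b, f t) ^ (k + 1) / (k + 1) := by
  set F := fun x => ∫ t in a..x, f t
  have hF : AbsolutelyContinuousOnInterval F a b :=
    hf.absolutelyContinuousOnInterval_intervalIntegral (by simp)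
  have hFpow : ∀ n : ℕ, AbsolutelyContinuousOnInterval (fun x => F x ^ (n + 1)) a b := by
    intro n
    induction n with
    | zero => simpa using hF
    | succ n ih => simpa only [pow_succ] using ih.fun_mul hF
  have hderiv : ∀ᵐ x, x ∈ Ι a b →
      deriv (fun x => F x ^ (k + 1)) x = (k + 1) * (f x * F x ^ k) := by
    filter_upwards [hf.ae_hasDerivAt_integral] with x hx hxab
    rw [((hx (uIoc_subset_uIcc hxab) a left_mem_uIcc).fun_pow (k + 1)).deriv]
    push_cast; ring
  have hFTC := (hFpow k).integral_deriv_eq_sub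
  rw [intervalIntegral.integral_congr_ae hderiv, intervalIntegral.integral_const_mul,
    show F a = 0 from intervalIntegral.integral_same, zero_pow k.succ_ne_zero, sub_zero] at hFTC
  rw [eq_div_iff (by positivity), mul_comm]
  exact hFTC

section KernelVanishingOnDiagonal
variable {E : Type*} [NormedAddCommGroup E] [NormedSpace ℝ E]
  {g : ℝ → ℝ} {g' : ℝ} {h : ℝ → E} {a b r : ℝ}

theorem isLittleO_integral_sub_smul (hh : IntervalIntegrable h volume a b) (hr : r ∈ Icc a b)
    (hg : HasDerivAt g g' r) :
    (fun x => ∫ t in r..x, (g t - g x) • h t) =o[𝓝[Icc a b] r] (fun x => x - r) := by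
  obtain ⟨C, hC0, hC⟩ := hg.isBigO_sub.exists_pos
  obtain ⟨δ, hδ, hCδ⟩ := Metric.eventually_nhds_iff.1 hC.bound
  have hab : uIcc a b = Icc a b := uIcc_of_le (hr.1.trans hr.2)
  have hm : (fun x => ∫ t in r..x, ‖h t‖) =o[𝓝[Icc a b] r] (fun _ => (1 : ℝ)) := by
    rw [Asymptotics.isLittleO_one_iff]
    have := intervalIntegral.continuousWithinAt_primitive (a := r) (b₀ := r) (b₁ := a) (b₂ := b)
      (μ := volume) (by simp) (by rw [min_eq_right hr.1, max_eq_right hr.2]; exact hh.norm)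
    simpa using this.tendsto
  -- For `t` between `r` and `x`, `|g t - g x| ≤ 2 C |x - r|`, while `∫_r^x ‖h‖ → 0`.
  have hbound : ∀ᶠ x in 𝓝[Icc a b] r, ‖∫ t in r..x, (g t - g x) • h t‖
      ≤ (2 * C) * ‖(x - r) * ∫ t in r..x, ‖h t‖‖ := by
    filter_upwards [self_mem_nhdsWithin, nhdsWithin_le_nhds (Metric.ball_mem_nhds r hδ)]
      with x hx hxδ
    have hhx : IntervalIntegrable h volume r x :=
      hh.mono_set (uIcc_subset_uIcc (hab ▸ hr) (hab ▸ hx))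
    have hgt : ∀ t ∈ Ι r x, ‖g t - g x‖ ≤ 2 * C * |x - r| := by
      intro t ht
      have htr : |t - r| ≤ |x - r| := abs_sub_left_of_mem_uIcc (uIoc_subset_uIcc ht)
      have h1 := hCδ (lt_of_le_of_lt htr hxδ)
      have h2 := hCδ hxδ
      simp only [Real.norm_eq_abs] at h1 h2 ⊢
      have h3 := abs_sub_le (g t) (g r) (g x)
      rw [abs_sub_comm (g r)] at h3
      nlinarith
    calc ‖∫ t in r..x, (g t - g x) • h t‖
        ≤ |∫ t in r..x, 2 * C * |x - r| * ‖h t‖| := by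
          refine intervalIntegral.norm_integral_le_abs_of_norm_le ?_ (hhx.norm.const_mul _)
          refine (ae_restrict_iff' measurableSet_uIoc).2 (ae_of_all _ fun t ht => ?_)
          rw [norm_smul]
          exact mul_le_mul_of_nonneg_right (hgt t ht) (norm_nonneg _)
      _ = (2 * C) * ‖(x - r) * ∫ t in r..x, ‖h t‖‖ := by
          rw [intervalIntegral.integral_const_mul, norm_mul, Real.norm_eq_abs, Real.norm_eq_abs,
            abs_mul, abs_mul, abs_abs, abs_of_pos (by positivity : 0 < 2 * C)]
          ring
  have hprod := (Asymptotics.isBigO_refl (fun x => x - r) (𝓝[Icc a b] r)).mul_isLittleO hm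
  simp only [mul_one] at hprod
  exact (Asymptotics.IsBigO.of_bound _ hbound).trans_isLittleO hprod

theorem hasDerivWithinAt_integral_sub_smul (hh : IntervalIntegrable h volume a b)
    (hgh : IntervalIntegrable (fun t => g t • h t) volume a b) (hr : r ∈ Icc a b)
    (hg : HasDerivAt g g' r) :
    HasDerivWithinAt (fun x => ∫ t in a..x, (g t - g x) • h t) (-g' • ∫ t in a..r, h t)
      (Icc a b) r := by
  have hab : uIcc a b = Icc a b := uIcc_of_le (hr.1.trans hr.2)
  have hint : ∀ c ∈ Icc a b, ∀ d ∈ Icc a b, ∀ x,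
      IntervalIntegrable (fun t => (g t - g x) • h t) volume c d := fun c hc d hd x => by
    simp only [sub_smul]
    exact (hgh.sub (hh.smul (g x))).mono_set (uIcc_subset_uIcc (hab ▸ hc) (hab ▸ hd))
  have hsplit : ∀ x ∈ Icc a b, ∫ t in a..x, (g t - g x) • h t =
      (∫ t in a..r, (g t - g r) • h t) + (∫ t in r..x, (g t - g x) • h t)
        - (g x - g r) • ∫ t in a..r, h t := by
    intro x hx
    have ha : a ∈ Icc a b := ⟨le_rfl, hr.1.trans hr.2⟩
    have hshift : ∫ t in a..r, (g t - g x) • h t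
        = (∫ t in a..r, (g t - g r) • h t) - (g x - g r) • ∫ t in a..r, h t := by
      have hhr : IntervalIntegrable (fun t => (g x - g r) • h t) volume a r :=
        (hh.mono_set (uIcc_subset_uIcc (hab ▸ ha) (hab ▸ hr))).smul _
      rw [← intervalIntegral.integral_smul, ← intervalIntegral.integral_sub (hint a ha r hr r) hhr]
      congr 1 with t
      simp only [sub_smul]
      abel
    rw [← intervalIntegral.integral_add_adjacent_intervals (hint a ha r hr x) (hint r hr x hx x),
      hshift]
    abel
  have hE : HasDerivWithinAt (fun x => ∫ t in r..x, (g t - g x) • h t) 0 (Icc a b) r := by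
    rw [hasDerivWithinAt_iff_isLittleO]
    simp [isLittleO_integral_sub_smul hh hr hg]
  have := ((hE.const_add (∫ t in a..r, (g t - g r) • h t)).sub
    ((hg.hasDerivWithinAt.sub_const (g r)).smul_const (∫ t in a..r, h t)))
  refine (this.congr (fun x hx => hsplit x hx) (hsplit r hr)).congr_deriv ?_
  simp

end KernelVanishingOnDiagonal

noncomputable def radialMass (V : ℝ → ℂ) (r : ℝ) : ℝ := ∫ t in 0..r, t * ‖V t‖

section RadialMass
variable {V : ℝ → ℂ}

theorem radialMass_nonneg {r : ℝ} (hr : 0 ≤ r) : 0 ≤ radialMass V r :=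
  intervalIntegral.integral_nonneg hr fun _ ht => mul_nonneg ht.1 (norm_nonneg _)

variable (hV : IntegrableOn (fun t : ℝ => t * ‖V t‖) (Ioc 0 1))
include hV

theorem radialMass_mono {x y : ℝ} (hx : 0 ≤ x) (hxy : x ≤ y) (hy : y ≤ 1) :
    radialMass V x ≤ radialMass V y := by
  refine intervalIntegral.integral_mono_interval le_rfl hx hxy ?_ ?_
  · filter_upwards [ae_restrict_mem measurableSet_Ioc] with t ht
    exact mul_nonneg ht.1.le (norm_nonneg _)
  · exact (intervalIntegrable_iff_integrableOn_Ioc_of_le (hx.trans hxy)).2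
      (hV.mono_set (Ioc_subset_Ioc le_rfl hy))

theorem continuousOn_radialMass : ContinuousOn (radialMass V) (Icc 0 1) := by
  have := intervalIntegral.continuousOn_primitive_interval'
    ((intervalIntegrable_iff_integrableOn_Ioc_of_le zero_le_one).2 hV) left_mem_uIcc
  rwa [uIcc_of_le zero_le_one] at this

theorem integrableOn_mul_radialMass_pow (k : ℕ) :
    IntegrableOn (fun t => t * ‖V t‖ * radialMass V t ^ k) (Ioc 0 1) := by
  refine (hV.mul_const (radialMass V 1 ^ k)).mono' ?_ ?_
  · exact hV.aestronglyMeasurable.mul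
      ((((continuousOn_radialMass hV).mono Ioc_subset_Icc_self).pow k).aestronglyMeasurable
        measurableSet_Ioc)
  · filter_upwards [ae_restrict_mem measurableSet_Ioc] with t ht
    have hQ := radialMass_nonneg (V := V) ht.1.le
    rw [norm_mul, norm_of_nonneg (mul_nonneg ht.1.le (norm_nonneg _)),
      norm_of_nonneg (by positivity)]
    gcongr
    exacts [mul_nonneg ht.1.le (norm_nonneg _), radialMass_mono hV ht.1.le ht.2 le_rfl]

theorem setIntegral_mul_radialMass_pow {x : ℝ} (hx : x ∈ Icc 0 1) (k : ℕ) :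
    ∫ t in Ioc 0 x, t * ‖V t‖ * radialMass V t ^ k = radialMass V x ^ (k + 1) / (k + 1) := by
  rw [← intervalIntegral.integral_of_le hx.1]
  exact integral_mul_primitive_pow ((intervalIntegrable_iff_integrableOn_Ioc_of_le hx.1).2
    (hV.mono_set (Ioc_subset_Ioc le_rfl hx.2))) k

end RadialMass

section WeightedEstimates
variable {V : ℝ → ℂ} {ρ : ℝ → ℝ} {f : ℝ → ℂ} {ℓ M c x : ℝ} {k : ℕ}

theorem norm_weight_mul_le {t : ℝ} (ht : 0 < t) (hρ : |ρ t| ≤ M * t ^ (-ℓ))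
    (hf : ‖f t‖ ≤ c * (t ^ (ℓ + 1) * radialMass V t ^ k)) :
    ‖(ρ t : ℂ) * V t * f t‖ ≤ M * c * (t * ‖V t‖ * radialMass V t ^ k) := by
  have hpow : t ^ (-ℓ) * t ^ (ℓ + 1) = t := by
    rw [← rpow_add ht, neg_add_cancel_left, rpow_one]
  rw [norm_mul, norm_mul, Complex.norm_real, norm_eq_abs]
  calc |ρ t| * ‖V t‖ * ‖f t‖
      ≤ M * t ^ (-ℓ) * ‖V t‖ * (c * (t ^ (ℓ + 1) * radialMass V t ^ k)) := by
        have := (abs_nonneg (ρ t)).trans hρ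
        gcongr
    _ = M * c * ((t ^ (-ℓ) * t ^ (ℓ + 1)) * ‖V t‖ * radialMass V t ^ k) := by ring
    _ = M * c * (t * ‖V t‖ * radialMass V t ^ k) := by rw [hpow]

variable (hρ : ∀ t ∈ Ioc 0 x, |ρ t| ≤ M * t ^ (-ℓ))
  (hf : ∀ t ∈ Ioc 0 x, ‖f t‖ ≤ c * (t ^ (ℓ + 1) * radialMass V t ^ k))
  (hV : IntegrableOn (fun t : ℝ => t * ‖V t‖) (Ioc 0 1))
include hρ hf hV

theorem integrableOn_weight_mul (hVmeas : Measurable V) (hρm : Measurable ρ)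
    (hfm : AEStronglyMeasurable f (volume.restrict (Ioc 0 x))) (hx : x ≤ 1) :
    IntegrableOn (fun t => (ρ t : ℂ) * V t * f t) (Ioc 0 x) := by
  refine Integrable.mono' (((integrableOn_mul_radialMass_pow hV k).mono_set
    (Ioc_subset_Ioc le_rfl hx)).const_mul (M * c)) ?_ ?_
  · exact ((Complex.measurable_ofReal.comp hρm).mul hVmeas).aestronglyMeasurable.restrict.mul hfm
  · filter_upwards [ae_restrict_mem measurableSet_Ioc] with t ht
    exact norm_weight_mul_le ht.1 (hρ t ht) (hf t ht)

theorem integral_norm_weight_mul_le (hx : x ∈ Icc 0 1) :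
    ∫ t in Ioc 0 x, ‖(ρ t : ℂ) * V t * f t‖
      ≤ M * c * (radialMass V x ^ (k + 1) / (k + 1)) := by
  rw [← setIntegral_mul_radialMass_pow hV hx, ← integral_const_mul]
  refine integral_mono_of_nonneg (ae_of_all _ fun t => norm_nonneg _)
    (((integrableOn_mul_radialMass_pow hV k).mono_set (Ioc_subset_Ioc le_rfl hx.2)).const_mul _) ?_
  filter_upwards [ae_restrict_mem measurableSet_Ioc] with t ht
  exact norm_weight_mul_le ht.1 (hρ t ht) (hf t ht)

end WeightedEstimates

section Kernel
variable {ℓ x t : ℝ}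

theorem besselKer_eq (hx : 0 < x) (ht : 0 < t) :
    besselKer ℓ x t = x ^ (ℓ + 1) / (2 * ℓ + 1) *
      ((t ^ (-(2 * ℓ + 1)) - x ^ (-(2 * ℓ + 1))) * t ^ (ℓ + 1)) := by
  have ht' : t ^ (-(2 * ℓ + 1)) * t ^ (ℓ + 1) = (t ^ ℓ)⁻¹ := by
    rw [← rpow_add ht, ← rpow_neg ht.le]; ring_nf
  have hx' : x ^ (ℓ + 1) * x ^ (-(2 * ℓ + 1)) = (x ^ ℓ)⁻¹ := by
    rw [← rpow_add hx, ← rpow_neg hx.le]; ring_nf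
  rw [besselKer, div_eq_mul_inv (x ^ (ℓ + 1)), div_eq_mul_inv (t ^ (ℓ + 1)), ← ht', ← hx']
  ring

theorem abs_besselKer_le_s10 (hℓ : 0 ≤ ℓ) (ht : 0 < t) (htx : t ≤ x) :
    |besselKer ℓ x t| ≤ x ^ (ℓ + 1) * t ^ (-ℓ) := by
  have hx := ht.trans_le htx
  have hdiff : 0 ≤ t ^ (-(2 * ℓ + 1)) - x ^ (-(2 * ℓ + 1)) :=
    sub_nonneg.2 (rpow_le_rpow_of_nonpos ht htx (by linarith))
  have hpow : t ^ (-(2 * ℓ + 1)) * t ^ (ℓ + 1) = t ^ (-ℓ) := by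
    rw [← rpow_add ht]; ring_nf
  rw [besselKer_eq hx ht, abs_of_nonneg (by positivity)]
  calc x ^ (ℓ + 1) / (2 * ℓ + 1) * ((t ^ (-(2 * ℓ + 1)) - x ^ (-(2 * ℓ + 1))) * t ^ (ℓ + 1))
      ≤ x ^ (ℓ + 1) / 1 * (t ^ (-(2 * ℓ + 1)) * t ^ (ℓ + 1)) := by
        gcongr
        · linarith
        · exact sub_le_self _ (by positivity)
    _ = x ^ (ℓ + 1) * t ^ (-ℓ) := by rw [div_one, hpow]

theorem abs_rpow_le_rpow_mul_rpow_neg (hℓ : 0 ≤ ℓ) (ht : 0 < t) (htx : t ≤ x) :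
    |t ^ (ℓ + 1)| ≤ x ^ (2 * ℓ + 1) * t ^ (-ℓ) := by
  rw [abs_of_nonneg (by positivity)]
  calc t ^ (ℓ + 1) = t ^ (2 * ℓ + 1) * t ^ (-ℓ) := by rw [← rpow_add ht]; ring_nf
    _ ≤ x ^ (2 * ℓ + 1) * t ^ (-ℓ) := by gcongr

end Kernel

section Iterates
variable {V : ℝ → ℂ} {ℓ x : ℝ}

theorem measurable_sppsPsi (hVmeas : Measurable V) : ∀ k, Measurable (sppsPsi ℓ V k)
  | 0 => by unfold sppsPsi; fun_prop
  | k + 1 => by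
    have hψ := measurable_sppsPsi hVmeas k
    have hset : MeasurableSet {p : ℝ × ℝ | p.2 ∈ Ioc 0 p.1} :=
      (measurableSet_lt measurable_const measurable_snd).inter
        (measurableSet_le measurable_snd measurable_fst)
    have hF : StronglyMeasurable (fun p : ℝ × ℝ => {p : ℝ × ℝ | p.2 ∈ Ioc 0 p.1}.indicator
        (fun p => ((besselKer ℓ p.1 p.2 : ℝ) : ℂ) * V p.2 * sppsPsi ℓ V k p.2) p) := by
      refine (Measurable.indicator ?_ hset).stronglyMeasurable
      unfold besselKer
      fun_prop
    convert (hF.integral_prod_right' (ν := volume)).measurable using 1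
    ext r
    dsimp only [sppsPsi]
    rw [← integral_indicator measurableSet_Ioc]
    rfl

variable (hV : IntegrableOn (fun t : ℝ => t * ‖V t‖) (Ioc 0 1)) (hℓ : 0 ≤ ℓ)
include hV hℓ

theorem norm_sppsPsi_le (k : ℕ) (hx : x ∈ Ioc 0 1) :
    ‖sppsPsi ℓ V k x‖ ≤ (k ! : ℝ)⁻¹ * (x ^ (ℓ + 1) * radialMass V x ^ k) := by
  induction k generalizing x with
  | zero =>
    simp [sppsPsi, abs_of_nonneg (rpow_nonneg hx.1.le _)]
  | succ k ih =>
    calc ‖sppsPsi ℓ V (k + 1) x‖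
        ≤ ∫ t in Ioc 0 x, ‖((besselKer ℓ x t : ℝ) : ℂ) * V t * sppsPsi ℓ V k t‖ :=
          norm_integral_le_integral_norm _
      _ ≤ x ^ (ℓ + 1) * (k ! : ℝ)⁻¹ * (radialMass V x ^ (k + 1) / (k + 1)) :=
          integral_norm_weight_mul_le (fun t ht => abs_besselKer_le_s10 hℓ ht.1 ht.2)
            (fun t ht => ih ⟨ht.1, ht.2.trans hx.2⟩) hV (Ioc_subset_Icc_self hx)
      _ = ((k + 1) ! : ℝ)⁻¹ * (x ^ (ℓ + 1) * radialMass V x ^ (k + 1)) := by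
          push_cast [Nat.factorial_succ]
          field_simp

theorem summable_sppsPsi (hx : x ∈ Ioc 0 1) : Summable (fun k => sppsPsi ℓ V k x) :=
  .of_norm_bounded ((Real.summable_pow_div_factorial (radialMass V x)).mul_left (x ^ (ℓ + 1)))
    fun k => (norm_sppsPsi_le hV hℓ k hx).trans_eq (by ring)

theorem norm_sppsW_le (hx : x ∈ Ioc 0 1) :
    ‖sppsW ℓ V x‖ ≤ exp (radialMass V 1) * x ^ (ℓ + 1) := by
  have hexp : HasSum (fun k : ℕ => x ^ (ℓ + 1) * (radialMass V x ^ k / k !))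
      (x ^ (ℓ + 1) * exp (radialMass V x)) :=
    (Real.exp_eq_exp_ℝ ▸ NormedSpace.expSeries_div_hasSum_exp (radialMass V x)).mul_left _
  calc ‖sppsW ℓ V x‖ ≤ x ^ (ℓ + 1) * exp (radialMass V x) :=
        tsum_of_norm_bounded hexp fun k => (norm_sppsPsi_le hV hℓ k hx).trans_eq (by ring)
    _ ≤ exp (radialMass V 1) * x ^ (ℓ + 1) := by
        rw [mul_comm]
        exact mul_le_mul_of_nonneg_right (exp_le_exp.2 (radialMass_mono hV hx.1.le hx.2 le_rfl))
          (rpow_nonneg hx.1.le _)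

theorem aestronglyMeasurable_sppsW (hVmeas : Measurable V) :
    AEStronglyMeasurable (sppsW ℓ V) (volume.restrict (Ioc 0 1)) := by
  refine aestronglyMeasurable_of_tendsto_ae atTop (fun n => (Finset.measurable_sum (Finset.range n)
    fun k _ => measurable_sppsPsi (ℓ := ℓ) hVmeas k).aestronglyMeasurable) ?_
  filter_upwards [ae_restrict_mem measurableSet_Ioc] with x hx
  exact (summable_sppsPsi hV hℓ hx).hasSum.tendsto_sum_nat

theorem sppsW_eq_rpow_add_integral (hVmeas : Measurable V) (hx : x ∈ Ioc 0 1) :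
    sppsW ℓ V x = ((x ^ (ℓ + 1) : ℝ) : ℂ) +
      ∫ t in Ioc 0 x, ((besselKer ℓ x t : ℝ) : ℂ) * V t * sppsW ℓ V t := by
  set F : ℕ → ℝ → ℂ := fun k t => ((besselKer ℓ x t : ℝ) : ℂ) * V t * sppsPsi ℓ V k t
  have hK : ∀ t ∈ Ioc 0 x, |besselKer ℓ x t| ≤ x ^ (ℓ + 1) * t ^ (-ℓ) :=
    fun t ht => abs_besselKer_le_s10 hℓ ht.1 ht.2
  have hψ : ∀ k, ∀ t ∈ Ioc 0 x,
      ‖sppsPsi ℓ V k t‖ ≤ (k ! : ℝ)⁻¹ * (t ^ (ℓ + 1) * radialMass V t ^ k) :=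
    fun k t ht => norm_sppsPsi_le hV hℓ k ⟨ht.1, ht.2.trans hx.2⟩
  have hF_int : ∀ k, Integrable (F k) (volume.restrict (Ioc 0 x)) := fun k =>
    integrableOn_weight_mul hK (hψ k) hV hVmeas (by unfold besselKer; fun_prop)
      (measurable_sppsPsi hVmeas k).aestronglyMeasurable hx.2
  have hF_sum : Summable fun k => ∫ t in Ioc 0 x, ‖F k t‖ := by
    refine .of_nonneg_of_le (fun k => integral_nonneg fun t => norm_nonneg _)
      (fun k => integral_norm_weight_mul_le hK (hψ k) hV (Ioc_subset_Icc_self hx))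
      (((summable_nat_add_iff 1).2 (Real.summable_pow_div_factorial (radialMass V x))).mul_left
        (x ^ (ℓ + 1)) |>.congr fun k => ?_)
    push_cast [Nat.factorial_succ]
    field_simp
  rw [sppsW, (summable_sppsPsi hV hℓ hx).tsum_eq_zero_add]
  congr 1
  calc ∑' k, sppsPsi ℓ V (k + 1) x = ∑' k, ∫ t in Ioc 0 x, F k t := rfl
    _ = ∫ t in Ioc 0 x, ∑' k, F k t := integral_tsum_of_summable_integral_norm hF_int hF_sum
    _ = _ := by simp only [F, tsum_mul_left]; rfl

end Iterates

section Derivative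
variable {V : ℝ → ℂ} {ℓ : ℝ} (hVmeas : Measurable V)
  (hV : IntegrableOn (fun t : ℝ => t * ‖V t‖) (Ioc 0 1)) (hℓ : 0 ≤ ℓ)
include hVmeas hV hℓ

theorem sppsW_div_rpow_eq {x : ℝ} (hx : x ∈ Ioc 0 1) :
    sppsW ℓ V x / ((x ^ (ℓ + 1) : ℝ) : ℂ) = 1 + (2 * ℓ + 1)⁻¹ •
      ∫ t in 0..x, (t ^ (-(2 * ℓ + 1)) - x ^ (-(2 * ℓ + 1))) •
        (((t ^ (ℓ + 1) : ℝ) : ℂ) * V t * sppsW ℓ V t) := by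
  have hx0 : ((x ^ (ℓ + 1) : ℝ) : ℂ) ≠ 0 := by exact_mod_cast (rpow_pos_of_pos hx.1 _).ne'
  rw [sppsW_eq_rpow_add_integral hV hℓ hVmeas hx, add_div, div_self hx0,
    intervalIntegral.integral_of_le hx.1.le, ← integral_smul, ← integral_div]
  congr 1
  refine setIntegral_congr_fun measurableSet_Ioc fun t ht => ?_
  rw [besselKer_eq hx.1 ht.1]
  simp only [Complex.real_smul]
  push_cast
  field_simp

theorem hasDerivWithinAt_sppsW_div_rpow {r : ℝ} (hr : r ∈ Ioc 0 1) :
    HasDerivWithinAt (fun x => sppsW ℓ V x / ((x ^ (ℓ + 1) : ℝ) : ℂ))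
      (r ^ (-(2 * ℓ + 2)) • ∫ t in 0..r, ((t ^ (ℓ + 1) : ℝ) : ℂ) * V t * sppsW ℓ V t)
      (Icc 0 1) r := by
  have hw : ∀ t ∈ Ioc (0 : ℝ) 1,
      ‖sppsW ℓ V t‖ ≤ exp (radialMass V 1) * (t ^ (ℓ + 1) * radialMass V t ^ 0) :=
    fun t ht => by simpa using norm_sppsW_le hV hℓ ht
  have hwm := aestronglyMeasurable_sppsW hV hℓ hVmeas
  have hh : IntervalIntegrable (fun t => ((t ^ (ℓ + 1) : ℝ) : ℂ) * V t * sppsW ℓ V t)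
      volume 0 1 :=
    (intervalIntegrable_iff_integrableOn_Ioc_of_le zero_le_one).2 <| integrableOn_weight_mul
      (fun t ht => abs_rpow_le_rpow_mul_rpow_neg hℓ ht.1 ht.2) hw hV hVmeas
      (by fun_prop) hwm le_rfl
  have hgh : IntervalIntegrable (fun t => t ^ (-(2 * ℓ + 1)) •
      (((t ^ (ℓ + 1) : ℝ) : ℂ) * V t * sppsW ℓ V t)) volume 0 1 := by
    have hρ : ∀ t ∈ Ioc (0 : ℝ) 1, |t ^ (-(2 * ℓ + 1)) * t ^ (ℓ + 1)| ≤ 1 * t ^ (-ℓ) := by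
      intro t ht
      rw [← rpow_add ht.1, abs_of_nonneg (rpow_nonneg ht.1.le _), one_mul,
        show -(2 * ℓ + 1) + (ℓ + 1) = -ℓ by ring]
    have heq : (fun t : ℝ => t ^ (-(2 * ℓ + 1)) • (((t ^ (ℓ + 1) : ℝ) : ℂ) * V t * sppsW ℓ V t))
        = fun t => ((t ^ (-(2 * ℓ + 1)) * t ^ (ℓ + 1) : ℝ) : ℂ) * V t * sppsW ℓ V t := by
      ext t
      simp only [Complex.real_smul]
      push_cast
      ring
    rw [heq]
    exact (intervalIntegrable_iff_integrableOn_Ioc_of_le zero_le_one).2 <|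
      integrableOn_weight_mul hρ hw hV hVmeas (by fun_prop) hwm le_rfl
  have hg : HasDerivAt (fun t : ℝ => t ^ (-(2 * ℓ + 1)))
      (-(2 * ℓ + 1) * r ^ (-(2 * ℓ + 1) - 1)) r :=
    hasDerivAt_rpow_const (Or.inl hr.1.ne')
  have hIoc : Ioc (0 : ℝ) 1 ∈ 𝓝[Icc 0 1] r :=
    mem_nhdsWithin.2 ⟨Ioi 0, isOpen_Ioi, hr.1, fun y hy => ⟨hy.1, hy.2.2⟩⟩
  refine ((hasDerivWithinAt_integral_sub_smul hh hgh (Ioc_subset_Icc_self hr) hg).const_smul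
    (2 * ℓ + 1)⁻¹ |>.const_add 1 |>.congr_of_eventuallyEq ?_
    (sppsW_div_rpow_eq hVmeas hV hℓ hr)).congr_deriv ?_
  · filter_upwards [hIoc] with x hx using sppsW_div_rpow_eq hVmeas hV hℓ hx
  · rw [smul_smul, neg_mul, neg_neg, ← mul_assoc, inv_mul_cancel₀ (by linarith), one_mul]
    ring_nf

theorem norm_derivWithin_sppsW_div_rpow_le {r : ℝ} (hr : r ∈ Ioc 0 1) :
    DifferentiableWithinAt ℝ (fun x => sppsW ℓ V x / ((x ^ (ℓ + 1) : ℝ) : ℂ)) (Icc 0 1) r ∧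
    ‖derivWithin (fun x => sppsW ℓ V x / ((x ^ (ℓ + 1) : ℝ) : ℂ)) (Icc 0 1) r‖
      ≤ radialMass V 1 * exp (radialMass V 1) / r := by
  have hd := hasDerivWithinAt_sppsW_div_rpow hVmeas hV hℓ hr
  refine ⟨hd.differentiableWithinAt, ?_⟩
  rw [hd.derivWithin (uniqueDiffOn_Icc zero_lt_one r (Ioc_subset_Icc_self hr)), norm_smul,
    norm_of_nonneg (rpow_nonneg hr.1.le _)]
  have hB : ‖∫ t in 0..r, ((t ^ (ℓ + 1) : ℝ) : ℂ) * V t * sppsW ℓ V t‖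
      ≤ r ^ (2 * ℓ + 1) * exp (radialMass V 1) * radialMass V r := by
    rw [intervalIntegral.integral_of_le hr.1.le]
    refine (norm_integral_le_integral_norm _).trans ((integral_norm_weight_mul_le
      (c := exp (radialMass V 1)) (k := 0)
      (fun t ht => abs_rpow_le_rpow_mul_rpow_neg hℓ ht.1 ht.2)
      (fun t ht => by simpa using norm_sppsW_le hV hℓ ⟨ht.1, ht.2.trans hr.2⟩) hV
      (Ioc_subset_Icc_self hr)).trans_eq ?_)
    simp
  have hrr : r ^ (-(2 * ℓ + 2)) * r ^ (2 * ℓ + 1) = r⁻¹ := by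
    rw [← rpow_add hr.1, ← rpow_neg_one]
    ring_nf
  calc r ^ (-(2 * ℓ + 2)) * ‖∫ t in 0..r, ((t ^ (ℓ + 1) : ℝ) : ℂ) * V t * sppsW ℓ V t‖
      ≤ r ^ (-(2 * ℓ + 2)) *
          (r ^ (2 * ℓ + 1) * exp (radialMass V 1) * radialMass V r) :=
        mul_le_mul_of_nonneg_left hB (rpow_nonneg hr.1.le _)
    _ = radialMass V r * exp (radialMass V 1) / r := by
        rw [← mul_assoc, ← mul_assoc, hrr]
        ring
    _ ≤ radialMass V 1 * exp (radialMass V 1) / r :=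
        div_le_div_of_nonneg_right (mul_le_mul_of_nonneg_right
          (radialMass_mono hV hr.1.le hr.2 le_rfl) (exp_pos _).le) hr.1.le

end Derivative

/-- There exist constants `C₁, C₂ > 0` (depending only on `d` and `∫₀¹ s|V(s)| ds`)
with `|α_m'(r)| ≤ m C₁ / r` for all `m ≥ 1` and `|α₀'(r)| ≤ C₂ / r`, on `(0,1]`. -/
theorem alphaFun_deriv_bound (d : ℕ) (hd : 3 ≤ d) (V : ℝ → ℂ) (hVmeas : Measurable V)
    (hV : IntegrableOn (fun s : ℝ => s * ‖V s‖) (Set.Ioc 0 1)) :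
    ∃ C₁ > (0 : ℝ), ∃ C₂ > (0 : ℝ),
      (∀ m : ℕ, 1 ≤ m → ∀ r ∈ Set.Ioc (0 : ℝ) 1,
        DifferentiableWithinAt ℝ (alphaFun d V m) (Set.Icc 0 1) r ∧
        ‖derivWithin (alphaFun d V m) (Set.Icc 0 1) r‖ ≤ (m : ℝ) * C₁ / r) ∧
      (∀ r ∈ Set.Ioc (0 : ℝ) 1,
        DifferentiableWithinAt ℝ (alphaFun d V 0) (Set.Icc 0 1) r ∧
        ‖derivWithin (alphaFun d V 0) (Set.Icc 0 1) r‖ ≤ C₂ / r) := by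
  have hℓ (m : ℕ) : 0 ≤ ellm d m := by
    have : (3 : ℝ) ≤ d := by exact_mod_cast hd
    unfold ellm
    positivity
  set C := radialMass V 1 * exp (radialMass V 1)
  have hC : 0 ≤ C := by have := radialMass_nonneg (V := V) zero_le_one; positivity
  refine ⟨C + 1, by linarith, C + 1, by linarith, fun m hm r hr => ?_, fun r hr => ?_⟩
  · obtain ⟨hdiff, hbound⟩ := norm_derivWithin_sppsW_div_rpow_le hVmeas hV (hℓ m) hr
    have hm' : (1 : ℝ) ≤ m := by exact_mod_cast hm
    refine ⟨hdiff, hbound.trans (div_le_div_of_nonneg_right ?_ hr.1.le)⟩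
    nlinarith
  · obtain ⟨hdiff, hbound⟩ := norm_derivWithin_sppsW_div_rpow_le hVmeas hV (hℓ 0) hr
    exact ⟨hdiff, hbound.trans (div_le_div_of_nonneg_right (by linarith) hr.1.le)⟩
end
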